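/- Let d ≥ 2 and let X ∈ ℝ^{d×d} be a nonsingular matrix whose rows all have unit Euclidean norm. Let λ_1, …, λ_d be the eigenvalues of XXᵀ, and let W be a random matrix distributed according to the Haar probability measure on the orthogonal group O(d). Then E_W[ φ(BN(WX)) ] ≤ φ(X) + log( 1 − Σ_{k=1}^d (λ_k − 1)² / (2d²(d+2)) ); moreover the logarithmic term is ≤ 0. -/

import Mathlib

/-!
For orthogonal `W`, `φ(BN(WX)) = φ(X) + (1/d) Σᵢ log tᵢ` with `tᵢ = ‖(WX)ᵢ‖² ∈ (0, d]`, and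
`log t ≤ (t - 1) - (t - 1)² / (3d)` on `(0, d]`. Writing `XXᵀ = U diag(λ) Uᵀ` and using invariance
under right multiplication by `U`, `tᵢ - 1` has the law of `Σₖ (λₖ - 1) wₖ²` for the `i`-th row `w`
of a Haar matrix. Hence its mean is `0` and its second moment is `2 Σₖ (λₖ - 1)² / (d(d+2))`, by
`E wₖ² = 1/d` and `E wₖ² wₗ² = (1 + 2δₖₗ)/(d(d+2))`. These moments follow from invariance alone:
Householder reflections show that the law of `⟨w, u⟩` depends only on `|u|`, and comparing
`u = eₐ ± e_b` with `√2 eₐ` gives `E wₐ⁴ = 3 E wₐ² w_b²`. So `E φ(BN(WX)) ≤ φ(X) - (4/3) v` with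
`v = Σₖ (λₖ - 1)² / (2d²(d+2)) ≤ 1/4`, and `-(4/3) v ≤ log(1 - v)` on `[0, 1/4]`.
-/

open MeasureTheory Matrix

/-- Euclidean norm of the `i`-th row of a square real matrix. -/
noncomputable def rowNorm {d : ℕ} (X : Matrix (Fin d) (Fin d) ℝ) (i : Fin d) : ℝ :=
  Real.sqrt (∑ j, X i j ^ 2)

/-- Batch normalization (without mean reduction): each row is rescaled to unit norm. -/
noncomputable def BN {d : ℕ} (X : Matrix (Fin d) (Fin d) ℝ) : Matrix (Fin d) (Fin d) ℝ :=
  Matrix.of fun i j => X i j / rowNorm X i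

/-- Isometry gap `φ(X) = -log( det(XᵀX)^{1/d} / ((1/d) Tr(XᵀX)) )`. -/
noncomputable def isoGap {d : ℕ} (X : Matrix (Fin d) (Fin d) ℝ) : ℝ :=
  - Real.log ((Xᵀ * X).det ^ ((1 : ℝ) / d) / ((1 / d : ℝ) * (Xᵀ * X).trace))

/-- Isometry `I(X) = exp(-φ(X))`. -/
noncomputable def isoI {d : ℕ} (X : Matrix (Fin d) (Fin d) ℝ) : ℝ :=
  Real.exp (- isoGap X)

/-- Matrices inherit the (Borel) product measurable structure of `Fin d → Fin d → ℝ`. -/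
instance matrixMeasurableSpace {d : ℕ} : MeasurableSpace (Matrix (Fin d) (Fin d) ℝ) :=
  (inferInstance : MeasurableSpace (Fin d → Fin d → ℝ))

/-- `μ` is the Haar probability measure on the orthogonal group `O(d)`, viewed as a
measure on `d × d` real matrices: it is a probability measure, concentrated on the
orthogonal matrices, and invariant under left and right translation by any orthogonal
matrix (these properties characterize the Haar probability measure uniquely). -/
def IsHaarOrthogonal {d : ℕ} (μ : Measure (Matrix (Fin d) (Fin d) ℝ)) : Prop :=
  IsProbabilityMeasure μ ∧
  (∀ᵐ W ∂μ, Wᵀ * W = 1) ∧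
  ∀ U : Matrix (Fin d) (Fin d) ℝ, Uᵀ * U = 1 →
    μ.map (fun W => U * W) = μ ∧ μ.map (fun W => W * U) = μ

open Finset

section Orthogonal

variable {n : Type*} [Fintype n] [DecidableEq n]

lemma Matrix.sum_sq_row_eq_one_of_transpose_mul_self {W : Matrix n n ℝ} (hW : Wᵀ * W = 1)
    (i : n) : ∑ j, W i j ^ 2 = 1 := by
  have h : W * Wᵀ = 1 := mul_eq_one_comm.mp hW
  simpa [Matrix.mul_apply, sq] using congrFun₂ h i i

lemma Matrix.transpose_mul_self_mul_eq_one {W U : Matrix n n ℝ} (hW : Wᵀ * W = 1)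
    (hU : Uᵀ * U = 1) : (W * U)ᵀ * (W * U) = 1 := by
  rw [Matrix.transpose_mul, Matrix.mul_assoc, ← Matrix.mul_assoc Wᵀ, hW, Matrix.one_mul, hU]

lemma Matrix.exists_transpose_mul_self_eq_one_mulVec_eq {u v : n → ℝ} (h : u ⬝ᵥ u = v ⬝ᵥ v) :
    ∃ H : Matrix n n ℝ, Hᵀ * H = 1 ∧ H *ᵥ v = u := by
  obtain rfl | huv := eq_or_ne u v
  · exact ⟨1, by simp, by simp⟩
  set w := v - u
  have hw0 : w ⬝ᵥ w ≠ 0 := by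
    rw [Ne, dotProduct_self_eq_zero, sub_eq_zero]; exact huv.symm
  have hwv : 2 / (w ⬝ᵥ w) * (w ⬝ᵥ v) = 1 := by
    have : w ⬝ᵥ w = 2 * (w ⬝ᵥ v) := by
      simp only [w, sub_dotProduct, dotProduct_sub, dotProduct_comm u v]; linarith
    field_simp; linarith
  set P := vecMulVec w w
  have hP : P * P = (w ⬝ᵥ w) • P := by
    rw [vecMulVec_mul_vecMulVec, vecMulVec_smul]
  -- the Householder reflection along `v - u`
  refine ⟨1 - (2 / (w ⬝ᵥ w)) • P, ?_, ?_⟩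
  · rw [transpose_sub, transpose_smul, show Pᵀ = P from transpose_vecMulVec w w, transpose_one]
    simp only [sub_mul, mul_sub, Matrix.one_mul, Matrix.mul_one, Matrix.mul_smul,
      Matrix.smul_mul, smul_smul, hP]
    match_scalars <;> field_simp; ring
  · rw [sub_mulVec, smul_mulVec, vecMulVec_mulVec, one_mulVec, op_smul_eq_smul, smul_smul, hwv,
      one_smul, sub_sub_cancel]

end Orthogonal

section BatchNorm

variable {d : ℕ}

lemma rowNorm_sq (Y : Matrix (Fin d) (Fin d) ℝ) (i : Fin d) : rowNorm Y i ^ 2 = ∑ j, Y i j ^ 2 :=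
  Real.sq_sqrt (sum_nonneg fun _ _ => sq_nonneg _)

lemma rowNorm_pos {Y : Matrix (Fin d) (Fin d) ℝ} (hY : Y.det ≠ 0) (i : Fin d) :
    0 < rowNorm Y i := by
  refine Real.sqrt_pos.2 <| (sum_nonneg fun _ _ => sq_nonneg _).lt_of_ne fun h => hY ?_
  refine Matrix.det_eq_zero_of_row_eq_zero i fun j => ?_
  exact pow_eq_zero_iff two_ne_zero |>.1 <|
    (sum_eq_zero_iff_of_nonneg fun _ _ => sq_nonneg _).1 h.symm j (mem_univ j)

lemma sum_sq_BN_row {Y : Matrix (Fin d) (Fin d) ℝ} {i : Fin d} (hi : rowNorm Y i ≠ 0) :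
    ∑ j, BN Y i j ^ 2 = 1 := by
  simp only [BN, Matrix.of_apply, div_pow, ← sum_div, ← rowNorm_sq]
  exact div_self (pow_ne_zero 2 hi)

lemma det_BN (Y : Matrix (Fin d) (Fin d) ℝ) : (BN Y).det = (∏ i, rowNorm Y i)⁻¹ * Y.det := by
  have : BN Y = Matrix.diagonal (fun i => (rowNorm Y i)⁻¹) * Y := by
    ext i j; simp [BN, Matrix.diagonal_mul, div_eq_inv_mul]
  rw [this, Matrix.det_mul, Matrix.det_diagonal, prod_inv_distrib]

lemma isoGap_eq_of_sum_sq_row_eq_one {M : Matrix (Fin d) (Fin d) ℝ}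
    (hM : ∀ i, ∑ j, M i j ^ 2 = 1) : isoGap M = -Real.log (M.det ^ 2) / d := by
  have htr : (Mᵀ * M).trace = d := by
    simp only [Matrix.trace, Matrix.diag_apply, Matrix.mul_apply, Matrix.transpose_apply, ← sq]
    rw [sum_comm]; simp [hM]
  have hdet : (Mᵀ * M).det = M.det ^ 2 := by rw [Matrix.det_mul, Matrix.det_transpose, sq]
  rcases Nat.eq_zero_or_pos d with rfl | hd
  · simp [isoGap]
  rcases eq_or_ne M.det 0 with h0 | h0
  · simp [isoGap, hdet, h0, Real.zero_rpow (inv_ne_zero (Nat.cast_ne_zero.2 hd.ne'))]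
  rw [isoGap, htr, hdet, one_div_mul_cancel (by positivity), div_one, Real.log_rpow (by positivity)]
  ring

lemma isoGap_BN {Y : Matrix (Fin d) (Fin d) ℝ} (hY : Y.det ≠ 0) :
    isoGap (BN Y) = (∑ i, Real.log (rowNorm Y i ^ 2) - Real.log (Y.det ^ 2)) / d := by
  have hpos := rowNorm_pos hY
  rw [isoGap_eq_of_sum_sq_row_eq_one fun i => sum_sq_BN_row (hpos i).ne', det_BN, mul_pow,
    inv_pow, ← prod_pow, Real.log_mul (inv_ne_zero <| prod_ne_zero_iff.2 fun i _ =>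
      (pow_pos (hpos i) 2).ne') (pow_ne_zero 2 hY), Real.log_inv,
    Real.log_prod fun i _ => (pow_pos (hpos i) 2).ne']
  ring

lemma isoGap_BN_mul {W X : Matrix (Fin d) (Fin d) ℝ} (hW : Wᵀ * W = 1) (hX : X.det ≠ 0)
    (hrows : ∀ i, ∑ j, X i j ^ 2 = 1) :
    isoGap (BN (W * X)) = isoGap X + (∑ i, Real.log (rowNorm (W * X) i ^ 2)) / d := by
  have hW2 : W.det ^ 2 = 1 := by simpa [sq] using congrArg Matrix.det hW
  have hWX : (W * X).det ≠ 0 := by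
    rw [Matrix.det_mul]; exact mul_ne_zero (fun h => by simp [h] at hW2) hX
  rw [isoGap_BN hWX, isoGap_eq_of_sum_sq_row_eq_one hrows, Matrix.det_mul, mul_pow, hW2, one_mul]
  ring

end BatchNorm

lemma Real.log_le_sub_one_sub_sq_div {M t : ℝ} (hM : 2 ≤ M) (ht : 0 < t) (htM : t ≤ M) :
    Real.log t ≤ t - 1 - (t - 1) ^ 2 / (3 * M) := by
  -- with `t = u ^ 2`: `log t ≤ 2 (u - 1) = t - 1 - (u - 1) ^ 2` and `(u + 1) ^ 2 ≤ 3 M`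
  obtain ⟨u, hu, rfl⟩ : ∃ u, 0 < u ∧ u ^ 2 = t := ⟨√t, Real.sqrt_pos.2 ht, Real.sq_sqrt ht.le⟩
  have hlog : Real.log (u ^ 2) ≤ 2 * (u - 1) := by
    rw [Real.log_pow]; push_cast; linarith [Real.log_le_sub_one_of_pos hu]
  have hum : u ≤ √M := Real.le_sqrt_of_sq_le htM
  have hM' : √M ^ 2 = M := Real.sq_sqrt (by linarith)
  have h3M : (u + 1) ^ 2 ≤ 3 * M := by nlinarith [sq_nonneg (√M - 1)]
  have hsq : (u ^ 2 - 1) ^ 2 / (3 * M) ≤ (u - 1) ^ 2 := by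
    rw [div_le_iff₀ (by linarith)]
    nlinarith [sq_nonneg (u - 1)]
  nlinarith

lemma Real.neg_four_thirds_mul_le_log_one_sub {v : ℝ} (hv0 : 0 ≤ v) (hv : v ≤ 1 / 4) :
    -(4 / 3 * v) ≤ Real.log (1 - v) := by
  have h := Real.one_sub_inv_le_log_of_pos (by linarith : 0 < 1 - v)
  have : (1 - v)⁻¹ ≤ 1 + 4 / 3 * v := by
    rw [inv_le_iff_one_le_mul₀ (by linarith)]; nlinarith
  linarith

lemma sum_sq_sub_one_div_le {d : ℕ} {c : Fin d → ℝ} (hc : ∀ k, c k ∈ Set.Icc 0 (d : ℝ))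
    (hsum : ∑ k, c k = d) : (∑ k, (c k - 1) ^ 2) / (2 * (d : ℝ) ^ 2 * (d + 2)) ≤ 1 / 4 := by
  have hs : ∑ k, (c k - 1) ^ 2 ≤ (d : ℝ) ^ 2 - d :=
    calc ∑ k, (c k - 1) ^ 2 ≤ ∑ k, ((d - 2) * c k + 1) :=
          sum_le_sum fun k _ => by nlinarith [(hc k).1, (hc k).2]
      _ = (d : ℝ) ^ 2 - d := by simp [sum_add_distrib, ← mul_sum, hsum]; ring
  refine div_le_of_le_mul₀ (by positivity) (by norm_num) ?_
  nlinarith [pow_nonneg (Nat.cast_nonneg (α := ℝ) d) 3]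

section MeasurableMul

variable {d : ℕ}

lemma Matrix.measurable_mul_const (U : Matrix (Fin d) (Fin d) ℝ) :
    Measurable fun W : Matrix (Fin d) (Fin d) ℝ => W * U :=
  measurable_pi_lambda _ fun i =>
    (by fun_prop : Measurable fun W : Matrix (Fin d) (Fin d) ℝ => W i ᵥ* U)

def Matrix.mulRightMeasurableEquiv {U : Matrix (Fin d) (Fin d) ℝ} (hU : Uᵀ * U = 1) :
    Matrix (Fin d) (Fin d) ℝ ≃ᵐ Matrix (Fin d) (Fin d) ℝ where
  toFun W := W * U
  invFun W := W * Uᵀ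
  left_inv W := by simp [Matrix.mul_assoc, mul_eq_one_comm.mp hU]
  right_inv W := by simp [Matrix.mul_assoc, hU]
  measurable_toFun := Matrix.measurable_mul_const U
  measurable_invFun := Matrix.measurable_mul_const Uᵀ

end MeasurableMul

namespace IsHaarOrthogonal

variable {d : ℕ} {μ : Measure (Matrix (Fin d) (Fin d) ℝ)}

lemma integral_comp_mul_right (hμ : IsHaarOrthogonal μ) {U : Matrix (Fin d) (Fin d) ℝ}
    (hU : Uᵀ * U = 1) (f : Matrix (Fin d) (Fin d) ℝ → ℝ) :
    ∫ W, f (W * U) ∂μ = ∫ W, f W ∂μ :=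
  MeasurePreserving.integral_comp' (f := Matrix.mulRightMeasurableEquiv hU)
    ⟨(Matrix.mulRightMeasurableEquiv hU).measurable, (hμ.2.2 U hU).2⟩ f

lemma ae_sum_sq_row_eq_one (hμ : IsHaarOrthogonal μ) : ∀ᵐ W ∂μ, ∀ i, ∑ j, W i j ^ 2 = 1 :=
  hμ.2.1.mono fun _ hW => Matrix.sum_sq_row_eq_one_of_transpose_mul_self hW

lemma integrable_comp_row (hμ : IsHaarOrthogonal μ) (i : Fin d) {g : (Fin d → ℝ) → ℝ}
    (hg : Continuous g) : Integrable (fun W => g (W i)) μ := by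
  have := hμ.1
  obtain ⟨C, hC⟩ := (isCompact_closedBall (0 : Fin d → ℝ) 1).exists_bound_of_continuousOn
    hg.continuousOn
  refine .of_bound (hg.measurable.comp (measurable_pi_apply i)).aestronglyMeasurable C ?_
  filter_upwards [hμ.ae_sum_sq_row_eq_one] with W hW
  refine hC _ (mem_closedBall_zero_iff.2 <| (pi_norm_le_iff_of_nonneg zero_le_one).2 fun j => ?_)
  rw [Real.norm_eq_abs, ← sq_le_one_iff_abs_le_one, ← hW i]
  exact single_le_sum (fun k _ => sq_nonneg (W i k)) (mem_univ j)

lemma integral_comp_dotProduct_row (hμ : IsHaarOrthogonal μ) (i : Fin d) {u v : Fin d → ℝ}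
    (h : u ⬝ᵥ u = v ⬝ᵥ v) (g : ℝ → ℝ) :
    ∫ W, g (W i ⬝ᵥ u) ∂μ = ∫ W, g (W i ⬝ᵥ v) ∂μ := by
  obtain ⟨H, hH, rfl⟩ := Matrix.exists_transpose_mul_self_eq_one_mulVec_eq h
  rw [← hμ.integral_comp_mul_right hH fun W => g (W i ⬝ᵥ v)]
  congr! 3 with W
  exact congrFun (Matrix.mulVec_mulVec v W H) i

lemma integral_entry_pow_eq (hμ : IsHaarOrthogonal μ) (i a b : Fin d) (m : ℕ) :
    ∫ W, W i a ^ m ∂μ = ∫ W, W i b ^ m ∂μ := by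
  simpa using hμ.integral_comp_dotProduct_row i (u := Pi.single a 1) (v := Pi.single b 1)
    (by simp) (· ^ m)

lemma integral_entry_sq (hμ : IsHaarOrthogonal μ) (i a : Fin d) :
    ∫ W, W i a ^ 2 ∂μ = 1 / d := by
  have hsum : ∑ b, ∫ W, W i b ^ 2 ∂μ = 1 := by
    have := hμ.1
    rw [← integral_finsetSum _ fun b _ => hμ.integrable_comp_row i (g := (· b ^ 2)) (by fun_prop),
      integral_congr_ae (hμ.ae_sum_sq_row_eq_one.mono fun W hW => hW i)]
    simp
  rw [sum_congr rfl fun b _ => hμ.integral_entry_pow_eq i b a 2, sum_const, card_univ,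
    Fintype.card_fin, nsmul_eq_mul] at hsum
  rw [eq_div_iff (by rintro h; simp [h] at hsum)]
  linarith

lemma integral_entry_pow_four_eq_three_mul (hμ : IsHaarOrthogonal μ) (i : Fin d) {a b : Fin d}
    (hab : a ≠ b) :
    ∫ W, W i a ^ 4 ∂μ = 3 * ∫ W, W i a ^ 2 * W i b ^ 2 ∂μ := by
  have hrot : ∀ σ : ℝ, σ ^ 2 = 1 → ∫ W, (W i a + W i b * σ) ^ 4 ∂μ = 4 * ∫ W, W i a ^ 4 ∂μ := by
    intro σ hσ
    have h := hμ.integral_comp_dotProduct_row i (u := Pi.single a 1 + Pi.single b σ)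
      (v := Pi.single a √2) (by simp [hab, hab.symm, ← sq, hσ]; norm_num) (· ^ 4)
    simp only [dotProduct_add, dotProduct_single, mul_one] at h
    rw [h, ← integral_const_mul]
    congr! 2 with W
    rw [mul_pow, show (4 : ℕ) = 2 * 2 from rfl, pow_mul √2, Real.sq_sqrt zero_le_two]
    ring
  have hsum : ∫ W, (W i a + W i b * 1) ^ 4 ∂μ + ∫ W, (W i a + W i b * -1) ^ 4 ∂μ =
      2 * ∫ W, W i a ^ 4 ∂μ + 12 * ∫ W, W i a ^ 2 * W i b ^ 2 ∂μ + 2 * ∫ W, W i b ^ 4 ∂μ := by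
    rw [← integral_add (hμ.integrable_comp_row i (g := fun w => (w a + w b * 1) ^ 4) (by fun_prop))
      (hμ.integrable_comp_row i (g := fun w => (w a + w b * -1) ^ 4) (by fun_prop)),
      ← integral_const_mul, ← integral_const_mul, ← integral_const_mul,
      ← integral_add (hμ.integrable_comp_row i (g := fun w => 2 * w a ^ 4) (by fun_prop))
        (hμ.integrable_comp_row i (g := fun w => 12 * (w a ^ 2 * w b ^ 2)) (by fun_prop)),
      ← integral_add
        (hμ.integrable_comp_row i (g := fun w => 2 * w a ^ 4 + 12 * (w a ^ 2 * w b ^ 2))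
          (by fun_prop))
        (hμ.integrable_comp_row i (g := fun w => 2 * w b ^ 4) (by fun_prop))]
    congr! 2 with W
    ring
  rw [hrot 1 (one_pow 2), hrot (-1) (by norm_num), hμ.integral_entry_pow_eq i b a] at hsum
  linarith

lemma integral_entry_sq_mul_entry_sq (hμ : IsHaarOrthogonal μ) (i a b : Fin d) :
    ∫ W, W i a ^ 2 * W i b ^ 2 ∂μ = (if a = b then 3 else 1) / (d * (d + 2)) := by
  set m := ∫ W, W i a ^ 4 ∂μ
  have hm : ∀ b, ∫ W, W i a ^ 2 * W i b ^ 2 ∂μ = (if a = b then 3 else 1) * (m / 3) := by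
    intro b
    split_ifs with hab
    · subst hab; simp_rw [← pow_add]; ring
    · simp only [m, hμ.integral_entry_pow_four_eq_three_mul i hab]; ring
  have hsum : ∑ b, ∫ W, W i a ^ 2 * W i b ^ 2 ∂μ = 1 / d := by
    rw [← integral_finsetSum _ fun b _ =>
        hμ.integrable_comp_row i (g := fun w => w a ^ 2 * w b ^ 2) (by fun_prop),
      ← hμ.integral_entry_sq i a]
    refine integral_congr_ae (hμ.ae_sum_sq_row_eq_one.mono fun W hW => ?_)
    simp only [← mul_sum, hW i, mul_one]
  have hcount : ∑ b, (if a = b then (3 : ℝ) else 1) = d + 2 := by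
    have h b : (if a = b then (3 : ℝ) else 1) = 1 + if a = b then 2 else 0 := by
      split_ifs <;> norm_num
    simp only [h, sum_add_distrib, sum_ite_eq, mem_univ, if_true, sum_const,
      card_univ, Fintype.card_fin, nsmul_eq_mul, mul_one]
  simp only [hm, ← sum_mul, hcount] at hsum
  have hd : (0 : ℝ) < d := by have := i.pos; positivity
  have hm3 : m / 3 = 1 / (d * (d + 2)) := by
    rw [eq_div_iff (by positivity)]; field_simp at hsum; linarith
  rw [hm b, hm3]
  ring

lemma integral_sum_mul_entry_sq (hμ : IsHaarOrthogonal μ) (i : Fin d) (c : Fin d → ℝ) :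
    ∫ W, ∑ k, c k * W i k ^ 2 ∂μ = (∑ k, c k) / d := by
  rw [integral_finsetSum _ fun k _ =>
    hμ.integrable_comp_row i (g := fun w => c k * w k ^ 2) (by fun_prop), sum_div]
  simp only [integral_const_mul, hμ.integral_entry_sq, mul_one_div]

lemma integral_sq_sum_mul_entry_sq (hμ : IsHaarOrthogonal μ) (i : Fin d) (c : Fin d → ℝ) :
    ∫ W, (∑ k, c k * W i k ^ 2) ^ 2 ∂μ =
      ((∑ k, c k) ^ 2 + 2 * ∑ k, c k ^ 2) / (d * (d + 2)) := by
  have hexp : ∀ W : Matrix (Fin d) (Fin d) ℝ, (∑ k, c k * W i k ^ 2) ^ 2 =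
      ∑ k, ∑ l, c k * c l * (W i k ^ 2 * W i l ^ 2) := by
    intro W
    rw [sq, sum_mul_sum]
    exact sum_congr rfl fun k _ => sum_congr rfl fun l _ => by ring
  have hint : ∀ k l, Integrable (fun W => c k * c l * (W i k ^ 2 * W i l ^ 2)) μ := fun k l =>
    hμ.integrable_comp_row i (g := fun w => c k * c l * (w k ^ 2 * w l ^ 2)) (by fun_prop)
  simp_rw [hexp]
  rw [integral_finsetSum _ fun k _ => integrable_finsetSum _ fun l _ => hint k l]
  simp_rw [integral_finsetSum _ fun l _ => hint _ l, integral_const_mul,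
    hμ.integral_entry_sq_mul_entry_sq]
  have h : ∀ k l, c k * c l * ((if k = l then (3 : ℝ) else 1) / (d * (d + 2))) =
      (c k * c l + if k = l then 2 * (c k * c l) else 0) / (d * (d + 2)) := by
    intro k l; split_ifs <;> ring
  simp only [h, ← sum_div, sum_add_distrib, sum_ite_eq, mem_univ, if_true, ← mul_sum, ← sum_mul,
    ← sq]

end IsHaarOrthogonal

section RealSpectral

variable {n : Type*} [Fintype n] [DecidableEq n] {A : Matrix n n ℝ}

lemma Matrix.IsHermitian.transpose_eigenvectorUnitary_mul_self (hA : A.IsHermitian) :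
    (hA.eigenvectorUnitary : Matrix n n ℝ)ᵀ * (hA.eigenvectorUnitary : Matrix n n ℝ) = 1 := by
  simpa [Matrix.star_eq_conjTranspose] using
    Matrix.mem_unitaryGroup_iff'.1 hA.eigenvectorUnitary.2

lemma Matrix.IsHermitian.eq_eigenvectorUnitary_mul_diagonal_mul_transpose (hA : A.IsHermitian) :
    A = (hA.eigenvectorUnitary : Matrix n n ℝ) * Matrix.diagonal hA.eigenvalues *
      (hA.eigenvectorUnitary : Matrix n n ℝ)ᵀ := by
  conv_lhs => rw [hA.spectral_theorem]
  simp [Unitary.conjStarAlgAut_apply, Matrix.star_eq_conjTranspose]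

end RealSpectral

section Spectral

variable {d : ℕ} {X : Matrix (Fin d) (Fin d) ℝ}

lemma rowNorm_mul_sq_eq_sum_eigenvalues (hA : (X * Xᵀ).IsHermitian)
    (W : Matrix (Fin d) (Fin d) ℝ) (i : Fin d) :
    rowNorm (W * X) i ^ 2 =
      ∑ k, hA.eigenvalues k * (W * (hA.eigenvectorUnitary : Matrix (Fin d) (Fin d) ℝ)) i k ^ 2 := by
  set U : Matrix (Fin d) (Fin d) ℝ := (hA.eigenvectorUnitary : Matrix (Fin d) (Fin d) ℝ)
  have h : (W * X) * (W * X)ᵀ = (W * U) * Matrix.diagonal hA.eigenvalues * (W * U)ᵀ :=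
    calc (W * X) * (W * X)ᵀ = W * (X * Xᵀ) * Wᵀ := by
          simp only [Matrix.transpose_mul, Matrix.mul_assoc]
      _ = W * (U * Matrix.diagonal hA.eigenvalues * Uᵀ) * Wᵀ := congrArg (W * · * Wᵀ)
          hA.eq_eigenvectorUnitary_mul_diagonal_mul_transpose
      _ = _ := by simp only [Matrix.transpose_mul, Matrix.mul_assoc]
  have hii := congrFun₂ h i i
  rw [Matrix.mul_apply, Matrix.mul_apply] at hii
  simp only [Matrix.mul_diagonal, Matrix.transpose_apply] at hii
  rw [rowNorm_sq]
  exact (sum_congr rfl fun j _ => sq _).trans (hii.trans (sum_congr rfl fun k _ => by ring))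

lemma sum_eigenvalues_eq_of_sum_sq_row_eq_one (hA : (X * Xᵀ).IsHermitian)
    (hrows : ∀ i, ∑ j, X i j ^ 2 = 1) : ∑ k, hA.eigenvalues k = d := by
  have h := hA.trace_eq_sum_eigenvalues
  simp only [Matrix.trace, Matrix.diag_apply, Matrix.mul_apply, Matrix.transpose_apply, ← sq,
    hrows] at h
  simpa using h.symm

lemma eigenvalues_pos_of_det_ne_zero (hA : (X * Xᵀ).IsHermitian) (hX : X.det ≠ 0) (k : Fin d) :
    0 < hA.eigenvalues k := by
  have hPD := Matrix.PosDef.mul_conjTranspose_self X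
    (Matrix.vecMul_injective_iff_isUnit.2 ((Matrix.isUnit_iff_isUnit_det X).2 hX.isUnit))
  rw [Matrix.conjTranspose_eq_transpose_of_trivial] at hPD
  exact hPD.eigenvalues_pos k

lemma eigenvalues_mem_Ioc (hA : (X * Xᵀ).IsHermitian) (hX : X.det ≠ 0)
    (hrows : ∀ i, ∑ j, X i j ^ 2 = 1) (k : Fin d) : hA.eigenvalues k ∈ Set.Ioc 0 (d : ℝ) := by
  refine ⟨eigenvalues_pos_of_det_ne_zero hA hX k, ?_⟩
  rw [← sum_eigenvalues_eq_of_sum_sq_row_eq_one hA hrows]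
  exact single_le_sum (fun l _ => (eigenvalues_pos_of_det_ne_zero hA hX l).le) (mem_univ k)

lemma exists_pos_forall_rowNorm_mul_sq_mem_Icc (hX : X.det ≠ 0)
    (hrows : ∀ i, ∑ j, X i j ^ 2 = 1) :
    ∃ c > 0, ∀ W : Matrix (Fin d) (Fin d) ℝ, Wᵀ * W = 1 →
      ∀ i, rowNorm (W * X) i ^ 2 ∈ Set.Icc c (d : ℝ) := by
  rcases isEmpty_or_nonempty (Fin d) with h | h
  · exact ⟨1, one_pos, fun _ _ i => isEmptyElim i⟩
  have hA : (X * Xᵀ).IsHermitian := by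
    simpa [Matrix.conjTranspose_eq_transpose_of_trivial] using
      Matrix.isHermitian_mul_conjTranspose_self X
  obtain ⟨k₀, hk₀⟩ := Finite.exists_min hA.eigenvalues
  refine ⟨_, eigenvalues_pos_of_det_ne_zero hA hX k₀, fun W hW i => ?_⟩
  have hV := Matrix.transpose_mul_self_mul_eq_one hW hA.transpose_eigenvectorUnitary_mul_self
  rw [rowNorm_mul_sq_eq_sum_eigenvalues hA]
  simpa [mul_comm] using (convex_Icc _ _).sum_mem (fun k _ => sq_nonneg _)
    (Matrix.sum_sq_row_eq_one_of_transpose_mul_self hV i)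
    fun k _ => ⟨hk₀ k, (eigenvalues_mem_Ioc hA hX hrows k).2⟩

lemma isoGap_BN_mul_le (hd : 2 ≤ d) {W : Matrix (Fin d) (Fin d) ℝ} (hW : Wᵀ * W = 1)
    (hX : X.det ≠ 0) (hrows : ∀ i, ∑ j, X i j ^ 2 = 1) :
    isoGap (BN (W * X)) ≤ isoGap X +
      (∑ i, (rowNorm (W * X) i ^ 2 - 1 - (rowNorm (W * X) i ^ 2 - 1) ^ 2 / (3 * d))) / d := by
  obtain ⟨c, hc, hbounds⟩ := exists_pos_forall_rowNorm_mul_sq_mem_Icc hX hrows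
  rw [isoGap_BN_mul hW hX hrows]
  gcongr with i
  exact Real.log_le_sub_one_sub_sq_div (by exact_mod_cast hd) (hc.trans_le (hbounds W hW i).1)
    (hbounds W hW i).2

end Spectral

namespace IsHaarOrthogonal

variable {d : ℕ} {μ : Measure (Matrix (Fin d) (Fin d) ℝ)}

lemma integrable_comp_rowNorm_mul_sq (hμ : IsHaarOrthogonal μ) (X : Matrix (Fin d) (Fin d) ℝ)
    (i : Fin d) {g : ℝ → ℝ} (hg : Continuous g) :
    Integrable (fun W => g (rowNorm (W * X) i ^ 2)) μ :=
  hμ.integrable_comp_row i (g := fun w => g (√(∑ j, (w ᵥ* X) j ^ 2) ^ 2)) (by fun_prop)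

lemma integral_rowNorm_mul_sq_sub_one_sub_sq_div (hμ : IsHaarOrthogonal μ)
    {X : Matrix (Fin d) (Fin d) ℝ} (hA : (X * Xᵀ).IsHermitian) (hrows : ∀ i, ∑ j, X i j ^ 2 = 1)
    (i : Fin d) (C : ℝ) :
    ∫ W, (rowNorm (W * X) i ^ 2 - 1 - (rowNorm (W * X) i ^ 2 - 1) ^ 2 / C) ∂μ =
      -(2 * (∑ k, (hA.eigenvalues k - 1) ^ 2) / (d * (d + 2)) / C) := by
  set c : Fin d → ℝ := fun k => hA.eigenvalues k - 1
  have hc : ∑ k, c k = 0 := by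
    simp [c, sum_sub_distrib, sum_eigenvalues_eq_of_sum_sq_row_eq_one hA hrows]
  have hint : Integrable (fun W => ∑ k, c k * W i k ^ 2) μ :=
    hμ.integrable_comp_row i (g := fun w => ∑ k, c k * w k ^ 2) (by fun_prop)
  have hint2 : Integrable (fun W => (∑ k, c k * W i k ^ 2) ^ 2 / C) μ :=
    hμ.integrable_comp_row i (g := fun w => (∑ k, c k * w k ^ 2) ^ 2 / C) (by fun_prop)
  calc ∫ W, (rowNorm (W * X) i ^ 2 - 1 - (rowNorm (W * X) i ^ 2 - 1) ^ 2 / C) ∂μ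
      = ∫ V, ((∑ k, hA.eigenvalues k * V i k ^ 2) - 1 -
          ((∑ k, hA.eigenvalues k * V i k ^ 2) - 1) ^ 2 / C) ∂μ := by
        rw [← hμ.integral_comp_mul_right hA.transpose_eigenvectorUnitary_mul_self
          fun V => (∑ k, hA.eigenvalues k * V i k ^ 2) - 1 -
            ((∑ k, hA.eigenvalues k * V i k ^ 2) - 1) ^ 2 / C]
        simp only [rowNorm_mul_sq_eq_sum_eigenvalues hA]
    _ = ∫ V, (∑ k, c k * V i k ^ 2 - (∑ k, c k * V i k ^ 2) ^ 2 / C) ∂μ := by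
        refine integral_congr_ae (hμ.ae_sum_sq_row_eq_one.mono fun V hV => ?_)
        have : ∑ k, hA.eigenvalues k * V i k ^ 2 - 1 = ∑ k, c k * V i k ^ 2 := by
          simp only [c, sub_mul, sum_sub_distrib, one_mul, hV i]
        simp only [this]
    _ = _ := by
        rw [integral_sub hint hint2, integral_div, hμ.integral_sum_mul_entry_sq,
          hμ.integral_sq_sum_mul_entry_sq, hc]
        simp [c]

lemma integrable_isoGap_BN_mul (hμ : IsHaarOrthogonal μ) {X : Matrix (Fin d) (Fin d) ℝ}
    (hX : X.det ≠ 0) (hrows : ∀ i, ∑ j, X i j ^ 2 = 1) :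
    Integrable (fun W => isoGap (BN (W * X))) μ := by
  have := hμ.1
  obtain ⟨c, hc, hbounds⟩ := exists_pos_forall_rowNorm_mul_sq_mem_Icc hX hrows
  have hlog : ∀ i, Integrable (fun W => Real.log (rowNorm (W * X) i ^ 2)) μ := fun i => by
    refine .of_bound ((by fun_prop : Measurable fun w : Fin d → ℝ =>
      Real.log (√(∑ j, (w ᵥ* X) j ^ 2) ^ 2)).comp (measurable_pi_apply i)).aestronglyMeasurable
      (max |Real.log c| |Real.log d|) ?_
    filter_upwards [hμ.2.1] with W hW
    obtain ⟨h1, h2⟩ := hbounds W hW i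
    exact abs_le_max_abs_abs (Real.log_le_log hc h1) (Real.log_le_log (hc.trans_le h1) h2)
  refine ((integrable_const (isoGap X)).add
    ((integrable_finsetSum univ fun i _ => hlog i).div_const (d : ℝ))).congr ?_
  filter_upwards [hμ.2.1] with W hW using (isoGap_BN_mul hW hX hrows).symm

end IsHaarOrthogonal

open IsHaarOrthogonal in
/-- for nonsingular `X` with unit-norm rows, eigenvalues `λ` of `XXᵀ`,
and `W` Haar-distributed on `O(d)`,
`E[φ(BN(WX))] ≤ φ(X) + log(1 − Σ_k (λ_k − 1)²/(2d²(d+2)))`, and the logarithmic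
term is nonpositive. -/
theorem expected_isoGap_BN_haar_le {d : ℕ} (hd : 2 ≤ d)
    (X : Matrix (Fin d) (Fin d) ℝ) (hX : X.det ≠ 0)
    (hrows : ∀ i, ∑ j, X i j ^ 2 = 1)
    (hsym : (X * Xᵀ).IsHermitian)
    (μ : Measure (Matrix (Fin d) (Fin d) ℝ)) (hμ : IsHaarOrthogonal μ) :
    (∫ W, isoGap (BN (W * X)) ∂μ) ≤
        isoGap X +
          Real.log (1 - (∑ k, (hsym.eigenvalues k - 1) ^ 2) / (2 * (d : ℝ) ^ 2 * (d + 2))) ∧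
      Real.log (1 - (∑ k, (hsym.eigenvalues k - 1) ^ 2) / (2 * (d : ℝ) ^ 2 * (d + 2))) ≤ 0 := by
  have := hμ.1
  set v := (∑ k, (hsym.eigenvalues k - 1) ^ 2) / (2 * (d : ℝ) ^ 2 * (d + 2)) with hv_def
  have hv0 : 0 ≤ v := by positivity
  have hv : v ≤ 1 / 4 := sum_sq_sub_one_div_le
    (fun k => Set.Ioc_subset_Icc_self (eigenvalues_mem_Ioc hsym hX hrows k))
    (sum_eigenvalues_eq_of_sum_sq_row_eq_one hsym hrows)
  set q : ℝ → ℝ := fun t => t - 1 - (t - 1) ^ 2 / (3 * d)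
  have hq i : Integrable (fun W => q (rowNorm (W * X) i ^ 2)) μ :=
    hμ.integrable_comp_rowNorm_mul_sq X i (by fun_prop)
  have hsum := integrable_finsetSum univ fun i _ => hq i
  have hval : ∫ W, (isoGap X + (∑ i, q (rowNorm (W * X) i ^ 2)) / d) ∂μ =
      isoGap X - 4 / 3 * v := by
    rw [integral_add (integrable_const _) (hsum.div_const _), integral_const, integral_div,
      integral_finsetSum univ fun i _ => hq i]
    simp only [q, integral_rowNorm_mul_sq_sub_one_sub_sq_div hμ hsym hrows, sum_const, card_univ,
      Fintype.card_fin, nsmul_eq_mul, probReal_univ, one_smul, hv_def]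
    field_simp
    ring
  refine ⟨?_, Real.log_nonpos (by linarith) (by linarith)⟩
  calc ∫ W, isoGap (BN (W * X)) ∂μ
      ≤ ∫ W, (isoGap X + (∑ i, q (rowNorm (W * X) i ^ 2)) / d) ∂μ :=
        integral_mono_ae (integrable_isoGap_BN_mul hμ hX hrows)
          ((integrable_const _).add (hsum.div_const _))
          (hμ.2.1.mono fun W hW => isoGap_BN_mul_le hd hW hX hrows)
    _ = isoGap X - 4 / 3 * v := hval
    _ ≤ _ := by linarith [Real.neg_four_thirds_mul_le_log_one_sub hv0 hv]
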